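/- arXiv:1301.0062 — 3 statements merged into one kernel-verified Lean document; each statement's English description precedes it below -/
import Mathlib

section
/- For every ε > 0 there exists M > 0 with the following property: for every h > 0 and every injective holomorphic function f on the open horizontal strip B_h = {z ∈ ℂ : |Im z| < h} satisfying f(z + 1) = f(z) + 1 for all z ∈ B_h, one has |f′(z) − 1| < ε for every z ∈ ℂ with |Im z| < h − M. -/
/-!
Injectivity and `f (z + 1) = f z + 1` bound `f'` at distance `1/4` from the boundary: by a
Bloch-type estimate the image of the disc of radius `1/4` about `z` contains a disc of radius
`‖f' z‖ / 512`. If that radius exceeded `1/2`, the disc would contain points `f x₂` and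
`f x₂ + 1 = f (x₂ + 1)` with `f x₁ = f x₂ + 1`, so `x₁ = x₂ + 1`, which is impossible for two
points of a disc of radius `1/4`.

So `g = f' - 1` is bounded and `1`-periodic, with mean zero on horizontal lines because
`∫₀¹ f' (t + c) dt = f (c + 1) - f c = 1`. In the coordinate `q = exp (2πiz)`, `g` becomes a
bounded holomorphic function on an annulus whose constant Laurent coefficient vanishes, and
Cauchy's formula on the annulus shows that `g` decays like `exp (-2πd)`, where `d` is the
distance to the boundary of the strip.
-/

open Complex Metric Set Filter Function Topology Function.Periodic
open scoped Real

section Bloch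

variable {f : ℂ → ℂ}

theorem ball_subset_image_closedBall_of_norm_deriv_sub_le {p c : ℂ} {ρ : ℝ}
    (hρ : 0 < ρ) (hc : c ≠ 0) (hf : ∀ z ∈ closedBall p ρ, DifferentiableAt ℂ f z)
    (hf' : ∀ z ∈ closedBall p ρ, ‖deriv f z - c‖ ≤ ‖c‖ / 4) :
    ball (f p) (3 / 8 * ‖c‖ * ρ) ⊆ f '' closedBall p ρ := by
  have hp : p ∈ closedBall p ρ := mem_closedBall_self hρ.le
  have hlin : ∀ z ∈ closedBall p ρ, ‖f z - f p - c * (z - p)‖ ≤ ‖c‖ / 4 * ‖z - p‖ := by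
    intro z hz
    have hmv := (convex_closedBall p ρ).norm_image_sub_le_of_norm_hasDerivWithin_le
      (f := fun w => f w - c * w) (fun w hw => by
        simpa using ((hf w hw).hasDerivAt.fun_sub ((hasDerivAt_id w).const_mul c)).hasDerivWithinAt)
      hf' hp hz
    calc ‖f z - f p - c * (z - p)‖ = ‖(f z - c * z) - (f p - c * p)‖ := by ring_nf
      _ ≤ ‖c‖ / 4 * ‖z - p‖ := hmv
  have hsphere : ∀ z ∈ sphere p ρ, 3 / 4 * ‖c‖ * ρ ≤ ‖f z - f p‖ := by
    intro z hz
    have hzp : ‖z - p‖ = ρ := mem_sphere_iff_norm.1 hz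
    have h1 := hlin z (sphere_subset_closedBall hz)
    have h2 : ‖c * (z - p)‖ ≤ ‖f z - f p‖ + ‖f z - f p - c * (z - p)‖ := by
      simpa using norm_sub_le (f z - f p) (f z - f p - c * (z - p))
    rw [norm_mul, hzp] at h2
    rw [hzp] at h1
    linarith
  have hdiff : DiffContOnCl ℂ f (ball p ρ) :=
    ⟨fun z hz => (hf z (ball_subset_closedBall hz)).differentiableWithinAt,
      closure_ball p hρ.ne' ▸ fun z hz => (hf z hz).continuousAt.continuousWithinAt⟩
  have hderiv : deriv f p ≠ 0 := by
    intro h0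
    have := hf' p hp
    rw [h0, zero_sub, norm_neg] at this
    linarith [norm_pos_iff.2 hc]
  have hnonconst : ∃ᶠ z in 𝓝 p, f z ≠ f p :=
    ((hf p hp).hasDerivAt.eventually_ne hderiv).frequently.filter_mono nhdsWithin_le_nhds
  convert hdiff.ball_subset_image_closedBall hρ hsphere hnonconst using 2
  ring

theorem norm_deriv_sub_deriv_le {p z : ℂ} {t K : ℝ} (hf : DifferentiableOn ℂ f (ball p t))
    (hK : ∀ w ∈ ball p t, ‖deriv f w‖ ≤ K) (hz : z ∈ ball p t) :
    ‖deriv f z - deriv f p‖ ≤ 2 * K / t * ‖z - p‖ := by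
  have hp : p ∈ ball p t := mem_ball_self (pos_of_mem_ball hz)
  have hmaps : MapsTo (deriv f) (ball p t) (closedBall (deriv f p) (2 * K)) := fun w hw => by
    rw [mem_closedBall_iff_norm]
    linarith [norm_sub_le (deriv f w) (deriv f p), hK w hw, hK p hp]
  simpa only [dist_eq_norm] using
    Complex.dist_le_div_mul_dist_of_mapsTo_ball (hf.deriv isOpen_ball) hmaps hz

/-- The rescaling step of Bloch's theorem: maximise `(r - ‖z - z₀‖) * ‖f' z‖` over the disc. -/
theorem exists_ball_forall_norm_deriv_le_two_mul {U : Set ℂ} {z₀ : ℂ} {r : ℝ}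
    (hU : IsOpen U) (hf : DifferentiableOn ℂ f U) (hr : closedBall z₀ r ⊆ U)
    (hm : 0 < r * ‖deriv f z₀‖) :
    ∃ p t, 0 < t ∧ ball p t ⊆ closedBall z₀ r ∧ r * ‖deriv f z₀‖ ≤ 2 * t * ‖deriv f p‖ ∧
      ∀ z ∈ ball p t, ‖deriv f z‖ ≤ 2 * ‖deriv f p‖ := by
  have hr0 : 0 < r := pos_of_mul_pos_left hm (norm_nonneg _)
  have hf' : ContinuousOn (deriv f) (closedBall z₀ r) := (hf.deriv hU).continuousOn.mono hr
  obtain ⟨p, -, hmax⟩ := (isCompact_closedBall z₀ r).exists_isMaxOn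
    (f := fun z => (r - ‖z - z₀‖) * ‖deriv f z‖) (nonempty_closedBall.2 hr0.le)
    (((continuous_const.sub (continuous_id.sub continuous_const).norm).continuousOn).mul hf'.norm)
  set t := (r - ‖p - z₀‖) / 2 with ht
  have hmax' : ∀ z ∈ closedBall z₀ r, (r - ‖z - z₀‖) * ‖deriv f z‖ ≤ 2 * t * ‖deriv f p‖ :=
    fun z hz => (hmax hz : _ ≤ (r - ‖p - z₀‖) * ‖deriv f p‖).trans_eq (by rw [ht]; ring)
  have hz₀ : r * ‖deriv f z₀‖ ≤ 2 * t * ‖deriv f p‖ := by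
    simpa using hmax' z₀ (mem_closedBall_self hr0.le)
  have htpos : 0 < t := by
    by_contra! h
    nlinarith [norm_nonneg (deriv f p)]
  have hball : ball p t ⊆ closedBall z₀ r := fun z hz => by
    rw [mem_closedBall, dist_eq_norm]
    linarith [norm_sub_le_norm_sub_add_norm_sub z p z₀, mem_ball_iff_norm.1 hz]
  refine ⟨p, t, htpos, hball, hz₀, fun z hz => ?_⟩
  have hzt : t ≤ r - ‖z - z₀‖ := by
    linarith [norm_sub_le_norm_sub_add_norm_sub z p z₀, mem_ball_iff_norm.1 hz]
  have : t * ‖deriv f z‖ ≤ t * (2 * ‖deriv f p‖) :=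
    calc t * ‖deriv f z‖ ≤ (r - ‖z - z₀‖) * ‖deriv f z‖ := by gcongr
      _ ≤ 2 * t * ‖deriv f p‖ := hmax' z (hball hz)
      _ = t * (2 * ‖deriv f p‖) := by ring
  exact le_of_mul_le_mul_left this htpos

theorem exists_ball_subset_image_closedBall {U : Set ℂ} {z₀ : ℂ} {r : ℝ}
    (hU : IsOpen U) (hf : DifferentiableOn ℂ f U) (hr : closedBall z₀ r ⊆ U) :
    ∃ w, ball w (r * ‖deriv f z₀‖ / 128) ⊆ f '' closedBall z₀ r := by
  rcases le_or_gt (r * ‖deriv f z₀‖) 0 with hm | hm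
  · exact ⟨0, by simp [ball_eq_empty.2 (by linarith : r * ‖deriv f z₀‖ / 128 ≤ 0)]⟩
  obtain ⟨p, t, ht, hball, hpt, hK⟩ := exists_ball_forall_norm_deriv_le_two_mul hU hf hr hm
  set c := deriv f p
  have hc : c ≠ 0 := by
    rintro h
    rw [h, norm_zero, mul_zero] at hpt
    linarith
  have hρ : closedBall p (t / 16) ⊆ ball p t := closedBall_subset_ball (by linarith)
  have hclose : ∀ z ∈ closedBall p (t / 16), ‖deriv f z - c‖ ≤ ‖c‖ / 4 := fun z hz =>
    calc ‖deriv f z - c‖ ≤ 2 * (2 * ‖c‖) / t * ‖z - p‖ :=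
          norm_deriv_sub_deriv_le (hf.mono (hball.trans hr)) hK (hρ hz)
      _ ≤ 2 * (2 * ‖c‖) / t * (t / 16) := by gcongr; exact mem_closedBall_iff_norm.1 hz
      _ = ‖c‖ / 4 := by field_simp; ring
  have himage := ball_subset_image_closedBall_of_norm_deriv_sub_le (by positivity) hc
    (fun z hz => hf.differentiableAt (hU.mem_nhds (hr (hball (hρ hz))))) hclose
  refine ⟨f p, (ball_subset_ball ?_).trans (himage.trans (image_mono (hρ.trans hball)))⟩
  nlinarith [norm_nonneg c]

end Bloch

section Annulus

variable {E : Type*} [NormedAddCommGroup E] [NormedSpace ℂ E] [CompleteSpace E]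
  {G : ℂ → E} {c q ζ : ℂ} {r R ρ : ℝ}

theorem continuousOn_sub_inv {s : Set ℂ} (hq : q ∉ s) : ContinuousOn (fun ζ => (ζ - q)⁻¹) s :=
  (continuousOn_id.sub continuousOn_const).inv₀ fun _ hζ =>
    sub_ne_zero.2 (ne_of_mem_of_not_mem hζ hq)

theorem sphere_subset_closedBall_sdiff_ball (hrρ : r ≤ ρ) (hρR : ρ ≤ R) :
    sphere c ρ ⊆ closedBall c R \ ball c r := fun _ hζ =>
  ⟨closedBall_subset_closedBall hρR (sphere_subset_closedBall hζ),
    fun h => (mem_ball.1 h).not_ge (hrρ.trans_eq (mem_sphere.1 hζ).symm)⟩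

theorem circleIntegral_sub_inv_of_notMem_closedBall (hr : 0 ≤ r) (hq : q ∉ closedBall c r) :
    (∮ ζ in C(c, r), (ζ - q)⁻¹) = 0 :=
  circleIntegral_eq_zero_of_differentiable_on_off_countable hr countable_empty
    (continuousOn_sub_inv hq) fun _ hζ => (differentiableAt_id.sub_const q).inv
      (sub_ne_zero.2 (ne_of_mem_of_not_mem (ball_subset_closedBall hζ.1) hq))

theorem two_pi_I_smul_eq_circleIntegral_sub_circleIntegral (hr : 0 < r)
    (hq : q ∈ ball c R \ closedBall c r)
    (hc : ContinuousOn G (closedBall c R \ ball c r))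
    (hd : DifferentiableOn ℂ G (ball c R \ closedBall c r)) :
    (2 * π * I : ℂ) • G q =
      (∮ ζ in C(c, R), (ζ - q)⁻¹ • G ζ) - ∮ ζ in C(c, r), (ζ - q)⁻¹ • G ζ := by
  obtain ⟨hqR, hqr⟩ := hq
  have hrR : r ≤ R := ((not_le.1 hqr).trans (mem_ball.1 hqR)).le
  have hopen : IsOpen (ball c R \ closedBall c r) := isOpen_ball.sdiff isClosed_closedBall
  have hdF : DifferentiableOn ℂ (dslope G q) (ball c R \ closedBall c r) :=
    (Complex.differentiableOn_dslope (hopen.mem_nhds ⟨hqR, hqr⟩)).2 hd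
  have hcF : ContinuousOn (dslope G q) (closedBall c R \ ball c r) := by
    intro w hw
    rcases eq_or_ne w q with rfl | hwq
    · exact (hdF.differentiableAt (hopen.mem_nhds ⟨hqR, hqr⟩)).continuousAt.continuousWithinAt
    · exact (continuousWithinAt_dslope_of_ne hwq).2 (hc w hw)
  -- Cauchy-Goursat for the difference quotient, which is holomorphic on the whole annulus
  have hgoursat := circleIntegral_eq_of_differentiable_on_annulus_off_countable hr hrR
    countable_empty hcF fun w hw => hdF.differentiableAt (hopen.mem_nhds hw.1)
  have hsplit : ∀ ρ, r ≤ ρ → ρ ≤ R → q ∉ sphere c ρ →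
      (∮ ζ in C(c, ρ), dslope G q ζ) =
        (∮ ζ in C(c, ρ), (ζ - q)⁻¹ • G ζ) - (∮ ζ in C(c, ρ), (ζ - q)⁻¹) • G q := by
    intro ρ hrρ hρR hqρ
    have hρ : 0 ≤ ρ := hr.le.trans hrρ
    have h1 : CircleIntegrable (fun ζ => (ζ - q)⁻¹ • G ζ) c ρ :=
      ((continuousOn_sub_inv hqρ).smul
        (hc.mono (sphere_subset_closedBall_sdiff_ball hrρ hρR))).circleIntegrable hρ
    have h2 : CircleIntegrable (fun ζ => (ζ - q)⁻¹ • G q) c ρ :=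
      ((continuousOn_sub_inv hqρ).smul continuousOn_const).circleIntegrable hρ
    rw [← circleIntegral.integral_smul_const, ← circleIntegral.integral_sub h1 h2]
    refine circleIntegral.integral_congr hρ fun ζ hζ => ?_
    simp only [dslope_of_ne _ (ne_of_mem_of_not_mem hζ hqρ), slope_def_module, smul_sub]
  rw [hsplit R hrR le_rfl fun h => (mem_ball.1 hqR).ne (mem_sphere.1 h),
    hsplit r le_rfl hrR fun h => hqr (sphere_subset_closedBall h),
    circleIntegral.integral_sub_inv_of_mem_ball hqR,
    circleIntegral_sub_inv_of_notMem_closedBall hr.le hqr, zero_smul, sub_zero] at hgoursat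
  rw [← hgoursat]
  abel

theorem norm_sub_inv_le_of_mem_sphere (hζ : ζ ∈ sphere c ρ) (hq : ρ < ‖q - c‖) :
    ‖(ζ - q)⁻¹‖ ≤ 1 / (‖q - c‖ - ρ) := by
  have h := norm_sub_norm_le (q - c) (ζ - c)
  rw [sub_sub_sub_cancel_right, mem_sphere_iff_norm.1 hζ, norm_sub_rev q ζ] at h
  rw [norm_inv, ← one_div]
  exact one_div_le_one_div_of_le (by linarith) h

theorem norm_sub_inv_sub_sub_inv_le_of_mem_sphere (hζ : ζ ∈ sphere c ρ) (hq : ‖q - c‖ < ρ) :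
    ‖(ζ - q)⁻¹ - (ζ - c)⁻¹‖ ≤ ‖q - c‖ / ((ρ - ‖q - c‖) * ρ) := by
  have hζc : ‖ζ - c‖ = ρ := mem_sphere_iff_norm.1 hζ
  have h := norm_sub_norm_le (ζ - c) (q - c)
  rw [sub_sub_sub_cancel_right, hζc] at h
  have hζq : ζ - q ≠ 0 := norm_pos_iff.1 (by linarith)
  have hζc' : ζ - c ≠ 0 := norm_pos_iff.1 (by linarith [norm_nonneg (q - c)])
  rw [show (ζ - q)⁻¹ - (ζ - c)⁻¹ = (q - c) / ((ζ - q) * (ζ - c)) by field_simp; ring,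
    norm_div, norm_mul, hζc]
  have hρ : 0 < ρ := (norm_nonneg _).trans_lt hq
  exact div_le_div_of_nonneg_left (norm_nonneg _) (mul_pos (by linarith) hρ)
    (mul_le_mul_of_nonneg_right h hρ.le)

/-- `hmean` says that the constant Laurent coefficient of `G` vanishes. -/
theorem norm_le_of_circleIntegral_sub_center_inv_smul_eq_zero {B : ℝ} (hr : 0 < r)
    (hq : q ∈ ball c R \ closedBall c r)
    (hc : ContinuousOn G (closedBall c R \ ball c r))
    (hd : DifferentiableOn ℂ G (ball c R \ closedBall c r))
    (hB : ∀ ζ ∈ sphere c r ∪ sphere c R, ‖G ζ‖ ≤ B)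
    (hmean : (∮ ζ in C(c, R), (ζ - c)⁻¹ • G ζ) = 0) :
    ‖G q‖ ≤ B * (‖q - c‖ / (R - ‖q - c‖) + r / (‖q - c‖ - r)) := by
  set d := ‖q - c‖
  have hdR : d < R := mem_ball_iff_norm.1 hq.1
  have hrd : r < d := not_le.1 (mem_closedBall_iff_norm.not.1 hq.2)
  have hR : 0 < R := hr.trans (hrd.trans hdR)
  have hGR : ContinuousOn G (sphere c R) :=
    hc.mono (sphere_subset_closedBall_sdiff_ball (hrd.trans hdR).le le_rfl)
  have hqR : q ∉ sphere c R := fun h => hdR.ne (mem_sphere_iff_norm.1 h)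
  have hcR : c ∉ sphere c R := fun h => hR.ne (by simpa using mem_sphere.1 h)
  have houter : (∮ ζ in C(c, R), (ζ - q)⁻¹ • G ζ) =
      ∮ ζ in C(c, R), ((ζ - q)⁻¹ - (ζ - c)⁻¹) • G ζ := by
    have h1 : CircleIntegrable (fun ζ => (ζ - q)⁻¹ • G ζ) c R :=
      ((continuousOn_sub_inv hqR).smul hGR).circleIntegrable hR.le
    have h2 : CircleIntegrable (fun ζ => (ζ - c)⁻¹ • G ζ) c R :=
      ((continuousOn_sub_inv hcR).smul hGR).circleIntegrable hR.le
    simp_rw [sub_smul]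
    rw [circleIntegral.integral_sub h1 h2, hmean, sub_zero]
  have hbound_outer : ‖∮ ζ in C(c, R), ((ζ - q)⁻¹ - (ζ - c)⁻¹) • G ζ‖ ≤
      2 * π * R * (d / ((R - d) * R) * B) :=
    circleIntegral.norm_integral_le_of_norm_le_const hR.le fun ζ hζ => by
      rw [norm_smul]
      exact mul_le_mul (norm_sub_inv_sub_sub_inv_le_of_mem_sphere hζ hdR) (hB ζ (Or.inr hζ))
        (norm_nonneg _) (by positivity)
  have hbound_inner : ‖∮ ζ in C(c, r), (ζ - q)⁻¹ • G ζ‖ ≤ 2 * π * r * (1 / (d - r) * B) :=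
    circleIntegral.norm_integral_le_of_norm_le_const hr.le fun ζ hζ => by
      rw [norm_smul]
      exact mul_le_mul (norm_sub_inv_le_of_mem_sphere hζ hrd) (hB ζ (Or.inl hζ))
        (norm_nonneg _) (one_div_nonneg.2 (by linarith))
  have hsum := norm_sub_le (∮ ζ in C(c, R), (ζ - q)⁻¹ • G ζ) (∮ ζ in C(c, r), (ζ - q)⁻¹ • G ζ)
  have h2pi : ‖(2 * π * I : ℂ)‖ = 2 * π := by simp [Real.pi_pos.le]
  rw [← two_pi_I_smul_eq_circleIntegral_sub_circleIntegral hr hq hc hd, norm_smul, h2pi,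
    houter] at hsum
  have hRd : R - d ≠ 0 := by linarith
  have hdr : d - r ≠ 0 := by linarith
  refine le_of_mul_le_mul_left (a := 2 * π) ?_ Real.two_pi_pos
  calc 2 * π * ‖G q‖ ≤ 2 * π * R * (d / ((R - d) * R) * B) + 2 * π * r * (1 / (d - r) * B) :=
        hsum.trans (add_le_add hbound_outer hbound_inner)
    _ = 2 * π * (B * (d / (R - d) + r / (d - r))) := by field_simp

end Annulus

def horizontalStrip (a : ℝ) : Set ℂ := {z : ℂ | |z.im| < a}

theorem isOpen_horizontalStrip (a : ℝ) : IsOpen (horizontalStrip a) :=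
  isOpen_lt (_root_.continuous_abs.comp continuous_im) continuous_const

theorem horizontalStrip_mono {a b : ℝ} (hab : a ≤ b) : horizontalStrip a ⊆ horizontalStrip b :=
  fun _ hz => lt_of_lt_of_le hz hab

@[simp]
theorem add_one_mem_horizontalStrip {a : ℝ} {z : ℂ} :
    z + 1 ∈ horizontalStrip a ↔ z ∈ horizontalStrip a := by
  simp [horizontalStrip]

theorem ofReal_sub_mul_I_mem_horizontalStrip {a Y : ℝ} (hY : |Y| < a) (t : ℝ) :
    (t : ℂ) - Y * I ∈ horizontalStrip a := by
  simpa [horizontalStrip] using hY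

theorem closedBall_subset_horizontalStrip {a r : ℝ} {z : ℂ} (hz : |z.im| + r < a) :
    closedBall z r ⊆ horizontalStrip a := by
  intro w hw
  have h1 : |(w - z).im| ≤ ‖w - z‖ := abs_im_le_norm _
  have h2 : |w.im| ≤ |z.im| + |(w - z).im| := by
    simpa using abs_add_le z.im (w - z).im
  show |w.im| < a
  linarith [mem_closedBall_iff_norm.1 hw]

theorem periodic_indicator_horizontalStrip {g : ℂ → ℂ} {a : ℝ}
    (hper : ∀ z ∈ horizontalStrip a, g (z + 1) = g z) :
    Periodic ((horizontalStrip a).indicator g) 1 := by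
  intro z
  by_cases hz : z ∈ horizontalStrip a
  · simp [indicator_of_mem hz, indicator_of_mem (add_one_mem_horizontalStrip.2 hz), hper z hz]
  · simp [indicator_of_notMem hz, indicator_of_notMem (mt add_one_mem_horizontalStrip.1 hz)]

theorem invQParam_mem_horizontalStrip {a Y : ℝ} (hYa : Y < a) {ζ : ℂ}
    (hζ : ζ ∈ closedBall 0 (Real.exp (2 * π * Y)) \ ball 0 (Real.exp (-(2 * π * Y)))) :
    invQParam 1 ζ ∈ horizontalStrip a := by
  have hlow : Real.exp (-(2 * π * Y)) ≤ ‖ζ‖ := by simpa using hζ.2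
  have hup : ‖ζ‖ ≤ Real.exp (2 * π * Y) := by simpa using hζ.1
  have hpos : 0 < ‖ζ‖ := (Real.exp_pos _).trans_le hlow
  have hlog : |Real.log ‖ζ‖| ≤ 2 * π * Y := abs_le.2
    ⟨(Real.le_log_iff_exp_le hpos).2 hlow, (Real.log_le_iff_le_exp hpos).2 hup⟩
  show |(invQParam 1 ζ).im| < a
  rw [im_invQParam, abs_mul, abs_div, abs_neg, abs_one, abs_of_pos Real.two_pi_pos,
    one_div_mul_eq_div, div_lt_iff₀ Real.two_pi_pos]
  nlinarith [Real.pi_pos]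

theorem qParam_mem_ball_sdiff_closedBall {Y : ℝ} {z : ℂ} (hz : |z.im| < Y) :
    qParam 1 z ∈ ball 0 (Real.exp (2 * π * Y)) \ closedBall 0 (Real.exp (-(2 * π * Y))) := by
  obtain ⟨hz₁, hz₂⟩ := abs_lt.1 hz
  rw [Set.mem_sdiff, mem_ball_zero_iff, mem_closedBall_zero_iff, not_le, norm_qParam, div_one]
  exact ⟨Real.exp_lt_exp.2 (by nlinarith [Real.pi_pos]),
    Real.exp_lt_exp.2 (by nlinarith [Real.pi_pos])⟩

theorem circleIntegral_inv_smul_cuspFunction {g : ℂ → ℂ} (hg : Periodic g 1) (Y : ℝ) :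
    (∮ ζ in C(0, Real.exp (2 * π * Y)), ζ⁻¹ • cuspFunction 1 g ζ) =
      2 * π * I * ∫ t in (0 : ℝ)..1, g (t - Y * I) := by
  set R := Real.exp (2 * π * Y)
  have hmap : ∀ θ : ℝ, circleMap 0 R θ = qParam 1 ((θ / (2 * π) : ℝ) - Y * I) := by
    intro θ
    rw [circleMap_zero, qParam, ofReal_exp, ← Complex.exp_add]
    congr 1
    push_cast
    field_simp
    ring_nf
    rw [I_sq]
    ring
  have hintegrand : ∀ θ : ℝ, deriv (circleMap 0 R) θ •
      ((circleMap 0 R θ)⁻¹ • cuspFunction 1 g (circleMap 0 R θ)) =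
      I * g ((θ / (2 * π) : ℝ) - Y * I) := by
    intro θ
    rw [deriv_circleMap, smul_eq_mul, smul_eq_mul, hmap, eq_cuspFunction one_ne_zero hg]
    have : qParam 1 ((θ / (2 * π) : ℝ) - Y * I) ≠ 0 := qParam_ne_zero _
    field_simp
  simp only [circleIntegral, hintegrand, intervalIntegral.integral_const_mul]
  rw [intervalIntegral.integral_comp_div (fun t : ℝ => g (t - Y * I)) Real.two_pi_pos.ne']
  simp [Real.pi_pos.ne']
  ring

theorem exp_div_exp_sub_exp_le {s u v : ℝ} (hs : 0 < s) (huv : s ≤ v - u) :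
    Real.exp u / (Real.exp v - Real.exp u) ≤ 1 / (Real.exp s - 1) := by
  have hs' : 0 < Real.exp s - 1 := sub_pos.2 (Real.one_lt_exp_iff.2 hs)
  have hvu : 0 < Real.exp (v - u) - 1 := hs'.trans_le (by gcongr)
  calc Real.exp u / (Real.exp v - Real.exp u) = 1 / (Real.exp (v - u) - 1) := by
        rw [Real.exp_sub]; field_simp
    _ ≤ 1 / (Real.exp s - 1) := one_div_le_one_div_of_le hs' (by gcongr)

theorem Function.Periodic.norm_le_of_integral_eq_zero {g : ℂ → ℂ} {a Y B : ℝ} {z : ℂ}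
    (hg : Periodic g 1) (hd : DifferentiableOn ℂ g (horizontalStrip a))
    (hB : ∀ w ∈ horizontalStrip a, ‖g w‖ ≤ B)
    (hYa : Y < a) (hmean : ∫ t in (0 : ℝ)..1, g (t - Y * I) = 0) (hz : |z.im| < Y) :
    ‖g z‖ ≤ 2 * B / (Real.exp (2 * π * (Y - |z.im|)) - 1) := by
  set r := Real.exp (-(2 * π * Y))
  set R := Real.exp (2 * π * Y)
  have hY : 0 < Y := (abs_nonneg _).trans_lt hz
  have hG : ∀ ζ ∈ closedBall (0 : ℂ) R \ ball 0 r,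
      cuspFunction 1 g ζ = g (invQParam 1 ζ) ∧ DifferentiableAt ℂ (cuspFunction 1 g) ζ := by
    intro ζ hζ
    have hζ0 : ζ ≠ 0 := by rintro rfl; simp [r, Real.exp_pos] at hζ
    have hmem := invQParam_mem_horizontalStrip hYa hζ
    refine ⟨cuspFunction_eq_of_nonzero 1 g hζ0, ?_⟩
    rw [← qParam_right_inv one_ne_zero hζ0]
    exact differentiableAt_cuspFunction one_ne_zero hg
      (hd.differentiableAt ((isOpen_horizontalStrip a).mem_nhds hmem))
  have hbound : ∀ ζ ∈ sphere (0 : ℂ) r ∪ sphere 0 R, ‖cuspFunction 1 g ζ‖ ≤ B := by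
    have hrR : r ≤ R := Real.exp_le_exp.2 (by nlinarith [Real.pi_pos])
    intro ζ hζ
    have hζ' : ζ ∈ closedBall 0 R \ ball 0 r := by
      rcases hζ with hζ | hζ
      exacts [sphere_subset_closedBall_sdiff_ball le_rfl hrR hζ,
        sphere_subset_closedBall_sdiff_ball hrR le_rfl hζ]
    rw [(hG ζ hζ').1]
    exact hB _ (invQParam_mem_horizontalStrip hYa hζ')
  have hmean' : (∮ ζ in C(0, R), (ζ - 0)⁻¹ • cuspFunction 1 g ζ) = 0 := by
    simp only [sub_zero]
    rw [circleIntegral_inv_smul_cuspFunction hg, hmean, mul_zero]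
  have key := norm_le_of_circleIntegral_sub_center_inv_smul_eq_zero (Real.exp_pos _)
    (qParam_mem_ball_sdiff_closedBall hz)
    (fun ζ hζ => (hG ζ hζ).2.continuousAt.continuousWithinAt)
    (fun ζ hζ => (hG ζ ⟨ball_subset_closedBall hζ.1, fun h => hζ.2 (ball_subset_closedBall h)⟩).2
      |>.differentiableWithinAt) hbound hmean'
  rw [eq_cuspFunction one_ne_zero hg, sub_zero, norm_qParam, div_one] at key
  have hs : 0 < 2 * π * (Y - |z.im|) := by nlinarith [Real.pi_pos]
  have hB0 : 0 ≤ B := (norm_nonneg _).trans (hB z (show |z.im| < a by linarith))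
  calc ‖g z‖ ≤ B * (1 / (Real.exp (2 * π * (Y - |z.im|)) - 1) +
        1 / (Real.exp (2 * π * (Y - |z.im|)) - 1)) :=
        key.trans (mul_le_mul_of_nonneg_left (add_le_add
          (exp_div_exp_sub_exp_le hs (by nlinarith [Real.pi_pos, neg_abs_le z.im]))
          (exp_div_exp_sub_exp_le hs (by nlinarith [Real.pi_pos, le_abs_self z.im]))) hB0)
    _ = 2 * B / (Real.exp (2 * π * (Y - |z.im|)) - 1) := by ring

theorem norm_le_of_integral_eq_zero_of_add_one_eq {g : ℂ → ℂ} {a Y B : ℝ} {z : ℂ}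
    (hd : DifferentiableOn ℂ g (horizontalStrip a))
    (hper : ∀ w ∈ horizontalStrip a, g (w + 1) = g w)
    (hB : ∀ w ∈ horizontalStrip a, ‖g w‖ ≤ B)
    (hYa : Y < a) (hmean : ∫ t in (0 : ℝ)..1, g (t - Y * I) = 0) (hz : |z.im| < Y) :
    ‖g z‖ ≤ 2 * B / (Real.exp (2 * π * (Y - |z.im|)) - 1) := by
  have hopen := isOpen_horizontalStrip a
  -- extended by zero, `g` becomes periodic on all of `ℂ`, as `cuspFunction` requires
  have heq : EqOn ((horizontalStrip a).indicator g) g (horizontalStrip a) :=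
    fun w hw => indicator_of_mem hw g
  have hY : |Y| < a := by rw [abs_of_pos ((abs_nonneg _).trans_lt hz)]; exact hYa
  rw [← heq (show |z.im| < a by linarith)]
  refine (periodic_indicator_horizontalStrip hper).norm_le_of_integral_eq_zero
    (fun w hw => ((hd w hw).differentiableAt (hopen.mem_nhds hw)).congr_of_eventuallyEq
      (heq.eventuallyEq_of_mem (hopen.mem_nhds hw)) |>.differentiableWithinAt)
    (fun w hw => heq hw ▸ hB w hw) hYa ?_ hz
  rwa [intervalIntegral.integral_congr fun t _ => heq (ofReal_sub_mul_I_mem_horizontalStrip hY t)]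

section Univalent

variable {f : ℂ → ℂ} {h : ℝ}

theorem norm_deriv_le_of_injOn_of_add_one (hd : DifferentiableOn ℂ f (horizontalStrip h))
    (hinj : InjOn f (horizontalStrip h)) (hper : ∀ z ∈ horizontalStrip h, f (z + 1) = f z + 1)
    {z : ℂ} (hz : |z.im| < h - 1 / 4) : ‖deriv f z‖ ≤ 256 := by
  by_contra! hlarge
  have hball : closedBall z (1 / 4) ⊆ horizontalStrip h :=
    closedBall_subset_horizontalStrip (by linarith)
  obtain ⟨w, hw⟩ := exists_ball_subset_image_closedBall (isOpen_horizontalStrip h) hd hball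
  have hmem : ∀ u : ℂ, ‖u‖ = 1 / 2 → w + u ∈ ball w (1 / 4 * ‖deriv f z‖ / 128) := fun u hu => by
    rw [mem_ball_iff_norm, add_sub_cancel_left, hu]
    linarith
  obtain ⟨x₁, hx₁, hfx₁⟩ := hw (hmem (1 / 2) (by norm_num))
  obtain ⟨x₂, hx₂, hfx₂⟩ := hw (hmem (-(1 / 2)) (by norm_num))
  have hx : x₁ = x₂ + 1 := by
    refine hinj (hball hx₁) (add_one_mem_horizontalStrip.2 (hball hx₂)) ?_
    rw [hper x₂ (hball hx₂), hfx₁, hfx₂]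
    ring
  have hdist : ‖(1 : ℂ)‖ ≤ ‖x₁ - z‖ + ‖x₂ - z‖ := by
    simpa [hx] using norm_sub_le (x₁ - z) (x₂ - z)
  rw [norm_one] at hdist
  linarith [mem_closedBall_iff_norm.1 hx₁, mem_closedBall_iff_norm.1 hx₂]

theorem deriv_add_one_eq (hper : ∀ z ∈ horizontalStrip h, f (z + 1) = f z + 1) {z : ℂ}
    (hz : z ∈ horizontalStrip h) : deriv f (z + 1) = deriv f z := by
  have hev : (fun w => f (w + 1)) =ᶠ[𝓝 z] fun w => f w + 1 :=
    eventually_of_mem ((isOpen_horizontalStrip h).mem_nhds hz) hper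
  simpa only [deriv_comp_add_const, deriv_add_const] using hev.deriv_eq

theorem integral_deriv_sub_one_eq_zero (hd : DifferentiableOn ℂ f (horizontalStrip h))
    (hper : ∀ z ∈ horizontalStrip h, f (z + 1) = f z + 1) {Y : ℝ} (hY : |Y| < h) :
    ∫ t in (0 : ℝ)..1, (deriv f (t - Y * I) - 1) = 0 := by
  have hline := ofReal_sub_mul_I_mem_horizontalStrip hY
  have hderiv : ∀ t : ℝ,
      HasDerivAt (fun t : ℝ => f (t - Y * I) - t) (deriv f (t - Y * I) - 1) t := fun t =>
    (((hd.differentiableAt ((isOpen_horizontalStrip h).mem_nhds (hline t))).hasDerivAt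
      |>.comp_sub_const _ _).sub (hasDerivAt_id _)).comp_ofReal
  have hcont : Continuous fun t : ℝ => deriv f (t - Y * I) - 1 :=
    ((hd.deriv (isOpen_horizontalStrip h)).continuousOn.comp_continuous (by fun_prop) hline).sub
      continuous_const
  rw [intervalIntegral.integral_eq_sub_of_hasDerivAt (fun t _ => hderiv t)
    (hcont.intervalIntegrable _ _)]
  have hper₀ := hper _ (hline 0)
  simp only [ofReal_zero, zero_sub, ofReal_one] at hper₀ ⊢
  rw [show (1 : ℂ) - Y * I = -(Y * I) + 1 by ring, hper₀]
  ring

end Univalent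

/-- Lifted distortion lemma: for every `ε > 0` there exists `M > 0` such that for every
`h > 0` and every injective holomorphic function `f` on the strip `{z : |Im z| < h}`
satisfying `f (z + 1) = f z + 1`, one has `|f' z - 1| < ε` whenever `|Im z| < h - M`. -/
theorem strip_distortion_lemma :
    ∀ ε : ℝ, 0 < ε → ∃ M : ℝ, 0 < M ∧ ∀ h : ℝ, 0 < h → ∀ f : ℂ → ℂ,
      DifferentiableOn ℂ f {z : ℂ | |z.im| < h} →
      Set.InjOn f {z : ℂ | |z.im| < h} →
      (∀ z ∈ {z : ℂ | |z.im| < h}, f (z + 1) = f z + 1) →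
      ∀ z : ℂ, |z.im| < h - M → ‖deriv f z - 1‖ < ε := by
  intro ε hε
  have hdecay : Tendsto (fun t : ℝ => 2 * 257 / (Real.exp (2 * π * t) - 1)) atTop (𝓝 0) :=
    tendsto_const_nhds.div_atTop (tendsto_atTop_add_const_right _ (-1)
      (Real.tendsto_exp_atTop.comp (tendsto_id.const_mul_atTop Real.two_pi_pos)))
  obtain ⟨T, hT⟩ := eventually_atTop.1 (hdecay.eventually (gt_mem_nhds hε))
  refine ⟨max T 0 + 1, by positivity, fun h _ f hd hinj hper z hz => ?_⟩
  have hz' : |z.im| < h - 1 / 2 := by linarith [le_max_right T 0]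
  have hstrip : horizontalStrip (h - 1 / 4) ⊆ horizontalStrip h :=
    horizontalStrip_mono (by linarith)
  have hB : ∀ w ∈ horizontalStrip (h - 1 / 4), ‖deriv f w - 1‖ ≤ 257 := fun w hw =>
    (norm_sub_le _ _).trans (by
      rw [norm_one]; linarith [norm_deriv_le_of_injOn_of_add_one hd hinj hper hw])
  have hmean := integral_deriv_sub_one_eq_zero hd hper (Y := h - 1 / 2)
    (abs_lt.2 ⟨by linarith [abs_nonneg z.im], by linarith⟩)
  calc ‖deriv f z - 1‖ ≤ 2 * 257 / (Real.exp (2 * π * (h - 1 / 2 - |z.im|)) - 1) :=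
        norm_le_of_integral_eq_zero_of_add_one_eq
          (((hd.deriv (isOpen_horizontalStrip h)).sub_const 1).mono hstrip)
          (fun w hw => by rw [deriv_add_one_eq hper (hstrip hw)]) hB (by linarith) hmean hz'
    _ < ε := hT _ (by linarith [le_max_left T 0])
end

section
/- Let h > 0 and 0 < r < 1, let f be an injective holomorphic function on the open horizontal strip B_h = {z ∈ ℂ : |Im z| < h} satisfying f(z + 1) = f(z) + 1 for all z ∈ B_h, and let z₀ ∈ ℂ satisfy |Im z₀| + 1/r ≤ h. Then f′(z₀) ≠ 0, and the function g defined on the open unit disk by g(w) = r·(f(z₀ + w/r) − f(z₀))/f′(z₀) is an injective holomorphic function on 𝔻 = {w ∈ ℂ : |w| < 1} with g(0) = 0, g′(0) = 1, and g(r) = r / f′(z₀). -/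
/-!
An injective holomorphic function has nonvanishing derivative: otherwise `f - f z₀` vanishes to
some order `n ≥ 2` at `z₀` (finite, since `f` is not locally constant), so locally
`f z - f z₀ = u z ^ n` with `u` a local biholomorphism onto a neighbourhood of `0` (take an
analytic `n`-th root of the nonvanishing factor). If `ζ` is a primitive `n`-th root of unity, the
preimages under `u` of a small `w ≠ 0` and of `ζ w` are distinct points with the same image.
-/

open Filter Set Topology Metric

theorem AnalyticAt.two_le_analyticOrderAt_sub_of_deriv_eq_zero {𝕜 E : Type*}
    [NontriviallyNormedField 𝕜] [CharZero 𝕜] [NormedAddCommGroup E] [NormedSpace 𝕜 E]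
    [CompleteSpace E] {f : 𝕜 → E} {z₀ : 𝕜}
    (hf : AnalyticAt 𝕜 f z₀) (hf' : deriv f z₀ = 0) :
    2 ≤ analyticOrderAt (f · - f z₀) z₀ := by
  have h : 1 ≤ analyticOrderAt (deriv f) z₀ :=
    Order.one_le_iff_ne_zero.mpr (analyticOrderAt_ne_zero.mpr ⟨hf.deriv, hf'⟩)
  rw [← hf.analyticOrderAt_deriv_add_one, ← one_add_one_eq_two]
  gcongr

theorem Set.InjOn.not_eventually_eq {X Y : Type*} [TopologicalSpace X] {f : X → Y} {s : Set X}
    {x : X} [(𝓝[≠] x).NeBot] (hf : InjOn f s) (hs : s ∈ 𝓝 x) : ¬ ∀ᶠ y in 𝓝 x, f y = f x := by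
  intro hconst
  obtain ⟨y, ⟨hfy, hy⟩, hyx⟩ :=
    ((hconst.and hs).filter_mono (nhdsWithin_le_nhds (s := {x}ᶜ)) |>.and self_mem_nhdsWithin).exists
  exact hyx (hf hy (mem_of_mem_nhds hs) hfy)

theorem AnalyticAt.exists_analyticAt_pow_eq {g : ℂ → ℂ} {z₀ : ℂ} (hg : AnalyticAt ℂ g z₀)
    (hg₀ : g z₀ ≠ 0) {n : ℕ} (hn : n ≠ 0) :
    ∃ φ : ℂ → ℂ, AnalyticAt ℂ φ z₀ ∧ ∀ z, φ z ^ n = g z := by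
  refine ⟨fun z ↦ g z₀ ^ (n⁻¹ : ℂ) * (g z / g z₀) ^ (n⁻¹ : ℂ), ?_, fun z ↦ ?_⟩
  · exact analyticAt_const.mul <| (hg.div_const (c := g z₀)).cpow analyticAt_const
      (by simp [hg₀])
  · rw [mul_pow, Complex.cpow_nat_inv_pow _ hn, Complex.cpow_nat_inv_pow _ hn,
      mul_div_cancel₀ _ hg₀]

theorem AnalyticAt.exists_map_nhds_eq_and_eventuallyEq_pow {f : ℂ → ℂ} {z₀ : ℂ}
    (hf : AnalyticAt ℂ f z₀) {n : ℕ} (hn : n ≠ 0) (hord : analyticOrderAt f z₀ = n) :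
    ∃ u : ℂ → ℂ, map u (𝓝 z₀) = 𝓝 0 ∧ f =ᶠ[𝓝 z₀] fun z ↦ u z ^ n := by
  obtain ⟨g, hg, hg₀, hfg⟩ := hf.analyticOrderAt_eq_natCast.mp hord
  obtain ⟨φ, hφ, hφg⟩ := hg.exists_analyticAt_pow_eq hg₀ hn
  have hφ₀ : φ z₀ ≠ 0 := fun h ↦ hg₀ (by rw [← hφg, h, zero_pow hn])
  have hu : HasStrictDerivAt (fun z ↦ (z - z₀) * φ z) (φ z₀) z₀ := by
    simpa using ((hasStrictDerivAt_id z₀).fun_sub (hasStrictDerivAt_const z₀ z₀)).fun_mul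
      hφ.hasStrictDerivAt
  refine ⟨fun z ↦ (z - z₀) * φ z, by simpa using hu.map_nhds_eq hφ₀, ?_⟩
  filter_upwards [hfg] with z hz
  rw [hz, smul_eq_mul, mul_pow, hφg]

theorem not_injOn_pow_of_map_nhds_eq {u : ℂ → ℂ} {z₀ : ℂ} (hu : map u (𝓝 z₀) = 𝓝 0) {n : ℕ}
    (hn : 2 ≤ n) {s : Set ℂ} (hs : s ∈ 𝓝 z₀) : ¬ InjOn (fun z ↦ u z ^ n) s := by
  intro hinj
  have hζ : IsPrimitiveRoot (Complex.exp (2 * Real.pi * Complex.I / n)) n :=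
    Complex.isPrimitiveRoot_exp n (by omega)
  set ζ := Complex.exp (2 * Real.pi * Complex.I / n)
  have hU : ∀ᶠ w in 𝓝 0, w ∈ u '' s := hu ▸ image_mem_map hs
  have hζU : ∀ᶠ w in 𝓝 0, ζ * w ∈ u '' s :=
    (continuous_const_mul ζ).tendsto' 0 0 (mul_zero ζ) hU
  obtain ⟨w, ⟨⟨z₁, hz₁, rfl⟩, z₂, hz₂, hz₂₁⟩, hw⟩ :=
    ((hU.and hζU).filter_mono (nhdsWithin_le_nhds (s := {0}ᶜ)) |>.and self_mem_nhdsWithin).exists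
  obtain rfl : z₁ = z₂ := hinj hz₁ hz₂ (by simp only [hz₂₁, mul_pow, hζ.pow_eq_one, one_mul])
  exact hζ.ne_one (by omega) ((mul_eq_right₀ hw).mp hz₂₁.symm)

theorem AnalyticAt.deriv_ne_zero_of_injOn {f : ℂ → ℂ} {z₀ : ℂ} {s : Set ℂ}
    (hf : AnalyticAt ℂ f z₀) (hinj : InjOn f s) (hs : s ∈ 𝓝 z₀) : deriv f z₀ ≠ 0 := by
  intro hf'
  have hfin : analyticOrderAt (f · - f z₀) z₀ ≠ ⊤ := by
    simpa only [Ne, analyticOrderAt_eq_top, sub_eq_zero] using hinj.not_eventually_eq hs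
  obtain ⟨n, hn⟩ := ENat.ne_top_iff_exists.mp hfin
  have h2n : 2 ≤ n := by
    exact_mod_cast hn ▸ hf.two_le_analyticOrderAt_sub_of_deriv_eq_zero hf'
  obtain ⟨u, hu, hfu⟩ :=
    (hf.sub analyticAt_const).exists_map_nhds_eq_and_eventuallyEq_pow (by omega) hn.symm
  have hinj' : InjOn (f · - f z₀) s := fun x hx y hy hxy ↦ hinj hx hy (sub_left_injective hxy)
  exact not_injOn_pow_of_map_nhds_eq hu h2n (inter_mem hs hfu)
    ((hinj'.mono inter_subset_left).congr fun z hz ↦ hz.2)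

theorem ball_subset_setOf_abs_im_lt {z₀ : ℂ} {ρ h : ℝ} (hρ : |z₀.im| + ρ ≤ h) :
    ball z₀ ρ ⊆ {z : ℂ | |z.im| < h} := by
  intro z hz
  calc |z.im| ≤ |z₀.im| + |(z - z₀).im| := by
        simpa using abs_add_le z₀.im (z - z₀).im
    _ ≤ |z₀.im| + ‖z - z₀‖ := by gcongr; exact Complex.abs_im_le_norm _
    _ < h := by rw [← dist_eq_norm]; linarith [mem_ball.mp hz]

theorem mapsTo_add_div_ball_zero_one (z₀ : ℂ) {r : ℝ} (hr : 0 < r) :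
    MapsTo (fun w : ℂ ↦ z₀ + w / r) (ball 0 1) (ball z₀ (1 / r)) := by
  intro w hw
  rw [mem_ball_zero_iff] at hw
  rw [mem_ball, dist_eq_norm, add_sub_cancel_left, norm_div, Complex.norm_real,
    Real.norm_of_nonneg hr.le]
  gcongr

theorem HasDerivAt.hasDerivAt_normalizedRescale {f : ℂ → ℂ} {f' z₀ c : ℂ}
    (hf : HasDerivAt f f' z₀) (hf' : f' ≠ 0) (hc : c ≠ 0) :
    HasDerivAt (fun w ↦ c * (f (z₀ + w / c) - f z₀) / f') 1 0 := by
  have hf₀ : HasDerivAt f f' (z₀ + 0 / c) := by simpa using hf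
  have haff : HasDerivAt (fun w ↦ z₀ + w / c) (1 / c) 0 :=
    ((hasDerivAt_id (0 : ℂ)).div_const c).const_add z₀
  exact (((hf₀.comp 0 haff).sub_const (f z₀)).const_mul c).div_const f' |>.congr_deriv
    (by field_simp)

theorem strip_rescaling_general (h r : ℝ) (hr0 : 0 < r)
    (f : ℂ → ℂ)
    (hf : DifferentiableOn ℂ f {z : ℂ | |z.im| < h})
    (hinj : Set.InjOn f {z : ℂ | |z.im| < h})
    (hper : ∀ z ∈ {z : ℂ | |z.im| < h}, f (z + 1) = f z + 1)
    (z₀ : ℂ) (hz₀ : |z₀.im| + 1 / r ≤ h) :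
    deriv f z₀ ≠ 0 ∧
    ∀ g : ℂ → ℂ,
      (∀ w : ℂ, g w = (r : ℂ) * (f (z₀ + w / (r : ℂ)) - f z₀) / deriv f z₀) →
      DifferentiableOn ℂ g (Metric.ball (0 : ℂ) 1) ∧
      Set.InjOn g (Metric.ball (0 : ℂ) 1) ∧
      g 0 = 0 ∧
      deriv g 0 = 1 ∧
      g (r : ℂ) = (r : ℂ) / deriv f z₀ := by
  set S := {z : ℂ | |z.im| < h}
  have hS : IsOpen S := isOpen_lt (by fun_prop) continuous_const
  have hz₀S : z₀ ∈ S := ball_subset_setOf_abs_im_lt hz₀ (mem_ball_self (by positivity))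
  have hfz₀ : AnalyticAt ℂ f z₀ := hf.analyticAt (hS.mem_nhds hz₀S)
  have hd : deriv f z₀ ≠ 0 := hfz₀.deriv_ne_zero_of_injOn hinj (hS.mem_nhds hz₀S)
  have hr : (r : ℂ) ≠ 0 := by exact_mod_cast hr0.ne'
  have hmaps : MapsTo (fun w : ℂ ↦ z₀ + w / r) (ball 0 1) S :=
    (mapsTo_add_div_ball_zero_one z₀ hr0).mono_right (ball_subset_setOf_abs_im_lt hz₀)
  refine ⟨hd, fun g hg ↦ ?_⟩
  obtain rfl : g = fun w ↦ (r : ℂ) * (f (z₀ + w / r) - f z₀) / deriv f z₀ := funext hg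
  refine ⟨?_, ?_, by simp, ?_, ?_⟩
  · exact ((hf.comp (by fun_prop) hmaps).sub_const _ |>.const_mul _).div_const _
  · have hscale : Function.Injective fun y : ℂ ↦ (r : ℂ) * (y - f z₀) / deriv f z₀ :=
      fun y₁ y₂ hy ↦ by simpa [hr, hd] using hy
    have haff : InjOn (fun w : ℂ ↦ z₀ + w / r) (ball 0 1) :=
      fun w₁ _ w₂ _ hw ↦ by simpa [hr] using hw
    exact hscale.injOn.comp (hinj.comp haff hmaps) (mapsTo_univ _ _)
  · exact (hfz₀.differentiableAt.hasDerivAt.hasDerivAt_normalizedRescale hd hr).deriv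
  · simp [div_self hr, hper z₀ hz₀S]

/-- Rescaling construction: if `f` is an injective holomorphic function on the strip
`{z : |Im z| < h}` with `f (z + 1) = f z + 1`, and `|Im z₀| + 1/r ≤ h` with `0 < r < 1`,
then `f' z₀ ≠ 0` and `g w = r (f (z₀ + w/r) - f z₀) / f' z₀` is injective holomorphic
on the unit disk with `g 0 = 0`, `g' 0 = 1`, and `g r = r / f' z₀`. -/
theorem strip_rescaling (h r : ℝ) (hh : 0 < h) (hr0 : 0 < r) (hr1 : r < 1)
    (f : ℂ → ℂ)
    (hf : DifferentiableOn ℂ f {z : ℂ | |z.im| < h})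
    (hinj : Set.InjOn f {z : ℂ | |z.im| < h})
    (hper : ∀ z ∈ {z : ℂ | |z.im| < h}, f (z + 1) = f z + 1)
    (z₀ : ℂ) (hz₀ : |z₀.im| + 1 / r ≤ h) :
    deriv f z₀ ≠ 0 ∧
    ∀ g : ℂ → ℂ,
      (∀ w : ℂ, g w = (r : ℂ) * (f (z₀ + w / (r : ℂ)) - f z₀) / deriv f z₀) →
      DifferentiableOn ℂ g (Metric.ball (0 : ℂ) 1) ∧
      Set.InjOn g (Metric.ball (0 : ℂ) 1) ∧
      g 0 = 0 ∧
      deriv g 0 = 1 ∧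
      g (r : ℂ) = (r : ℂ) / deriv f z₀ :=
  strip_rescaling_general h r hr0 f hf hinj hper z₀ hz₀
end

section
/- Let t, s ∈ ℂ with s² = t and 0 < |t| < 1, and define F(w) = (s·e^{2πiw}, s·e^{−2πiw}) for w ∈ ℂ. Then: (i) for every w with |Im w| < (1/(4π))·log(16/|t|), the point F(w) lies in C_t = {(x,y) ∈ ℂ² : x·y = t, |x| < 4, |y| < 4}; (ii) every point of C_t equals F(w) for some w with |Im w| < (1/(4π))·log(16/|t|); and (iii) for w, w′ with |Im w|, |Im w′| < (1/(4π))·log(16/|t|), one has F(w) = F(w′) if and only if w − w′ ∈ ℤ. -/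
/-!
Writing `e(w) = exp(2πiw)`, we have `‖s e(w)‖ = ‖s‖ e^{-2π Im w}` and `‖s e(-w)‖ = ‖s‖ e^{2π Im w}`,
so both coordinates have norm `< R` exactly when `|Im w| < log(R/‖s‖)/(2π)`; for `R = 4` and
`‖s‖² = ‖t‖` this is the modulus `(1/4π) log(16/‖t‖)`. Every `(x, y)` with `xy = s²` is hit by
taking `w = log(x/s)/(2πi)`, and `e(w) = e(w')` exactly when `w - w' ∈ ℤ`.
-/

open Complex
open scoped Real

noncomputable def plumbingParam (s w : ℂ) : ℂ × ℂ :=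
  (s * exp (2 * π * I * w), s * exp (-(2 * π * I * w)))

def plumbingFiber (t : ℂ) (R : ℝ) : Set (ℂ × ℂ) :=
  {p | p.1 * p.2 = t ∧ ‖p.1‖ < R ∧ ‖p.2‖ < R}

lemma norm_exp_two_pi_I_mul (w : ℂ) :
    ‖exp (2 * π * I * w)‖ = Real.exp (-(2 * π * w.im)) := by
  rw [norm_exp]
  congr 1
  simp [mul_re, mul_im]

lemma norm_exp_neg_two_pi_I_mul (w : ℂ) :
    ‖exp (-(2 * π * I * w))‖ = Real.exp (2 * π * w.im) := by
  rw [exp_neg, norm_inv, norm_exp_two_pi_I_mul, ← Real.exp_neg, neg_neg]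

lemma mul_exp_lt_iff_lt_log {a R u : ℝ} (ha : 0 < a) (hR : 0 < R) :
    a * Real.exp u < R ↔ u < Real.log (R / a) := by
  rw [← lt_div_iff₀' ha, Real.lt_log_iff_exp_lt (div_pos hR ha)]

lemma plumbingParam_fst_mul_snd (s w : ℂ) :
    (plumbingParam s w).1 * (plumbingParam s w).2 = s ^ 2 := by
  simp only [plumbingParam, exp_neg]
  field_simp [exp_ne_zero]

lemma plumbingParam_mem_plumbingFiber_iff {s : ℂ} (hs : s ≠ 0) {R : ℝ} (hR : 0 < R) (w : ℂ) :
    plumbingParam s w ∈ plumbingFiber (s ^ 2) R ↔ |w.im| < Real.log (R / ‖s‖) / (2 * π) := by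
  have hs' : 0 < ‖s‖ := norm_pos_iff.2 hs
  simp only [plumbingFiber, Set.mem_ofPred_eq, plumbingParam_fst_mul_snd, true_and]
  simp only [plumbingParam, norm_mul, norm_exp_two_pi_I_mul, norm_exp_neg_two_pi_I_mul,
    mul_exp_lt_iff_lt_log hs' hR]
  rw [lt_div_iff₀ Real.two_pi_pos, ← abs_of_pos Real.two_pi_pos, ← abs_mul,
    abs_of_pos Real.two_pi_pos, mul_comm, abs_lt, neg_lt]

lemma exists_plumbingParam_eq {s x y : ℂ} (hs : s ≠ 0) (hxy : x * y = s ^ 2) :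
    ∃ w, plumbingParam s w = (x, y) := by
  have hx : x ≠ 0 := left_ne_zero_of_mul (hxy ▸ pow_ne_zero 2 hs)
  refine ⟨log (x / s) / (2 * π * I), ?_⟩
  rw [plumbingParam, mul_div_cancel₀ _ two_pi_I_ne_zero, exp_neg, exp_log (div_ne_zero hx hs)]
  ext
  · field_simp
  · field_simp
    exact hxy.symm

lemma plumbingParam_eq_iff {s : ℂ} (hs : s ≠ 0) {w w' : ℂ} :
    plumbingParam s w = plumbingParam s w' ↔ ∃ k : ℤ, w - w' = k := by
  have hexp : exp (2 * π * I * w) = exp (2 * π * I * w') ↔ ∃ k : ℤ, w - w' = k := by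
    rw [exp_eq_exp_iff_exists_int]
    refine exists_congr fun k => ?_
    constructor
    · intro h
      exact mul_left_cancel₀ two_pi_I_ne_zero (by linear_combination h)
    · intro h
      linear_combination 2 * π * I * h
  simp only [plumbingParam, Prod.ext_iff, mul_right_inj' hs, exp_neg, inv_inj, and_self, hexp]

lemma plumbing_modulus_eq (s : ℂ) :
    1 / (4 * π) * Real.log (16 / ‖s ^ 2‖) = Real.log (4 / ‖s‖) / (2 * π) := by
  rw [norm_pow, show (16 : ℝ) / ‖s‖ ^ 2 = (4 / ‖s‖) ^ 2 by ring, Real.log_pow]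
  field_simp
  ring

theorem plumbing_fiber_parametrization_general (t s : ℂ) (hs : s ^ 2 = t)
    (ht0 : 0 < ‖t‖)
    (F : ℂ → ℂ × ℂ)
    (hF : ∀ w : ℂ, F w = (s * Complex.exp (2 * Real.pi * Complex.I * w),
                          s * Complex.exp (-(2 * Real.pi * Complex.I * w)))) :
    (∀ w : ℂ, |w.im| < (1 / (4 * Real.pi)) * Real.log (16 / ‖t‖) →
      F w ∈ {p : ℂ × ℂ | p.1 * p.2 = t ∧ ‖p.1‖ < 4 ∧ ‖p.2‖ < 4}) ∧
    (∀ p ∈ {p : ℂ × ℂ | p.1 * p.2 = t ∧ ‖p.1‖ < 4 ∧ ‖p.2‖ < 4},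
      ∃ w : ℂ, |w.im| < (1 / (4 * Real.pi)) * Real.log (16 / ‖t‖) ∧ F w = p) ∧
    (∀ w w' : ℂ, |w.im| < (1 / (4 * Real.pi)) * Real.log (16 / ‖t‖) →
      |w'.im| < (1 / (4 * Real.pi)) * Real.log (16 / ‖t‖) →
      (F w = F w' ↔ ∃ k : ℤ, w - w' = (k : ℂ))) := by
  subst hs
  obtain rfl : F = plumbingParam s := funext hF
  have hs0 : s ≠ 0 := by rintro rfl; simp at ht0
  have mem_iff := plumbingParam_mem_plumbingFiber_iff hs0 four_pos
  change (∀ w, _ → _ ∈ plumbingFiber (s ^ 2) 4) ∧ (∀ p ∈ plumbingFiber (s ^ 2) 4, _) ∧ _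
  simp only [plumbing_modulus_eq s]
  refine ⟨fun w hw => (mem_iff w).2 hw, ?_, fun w w' _ _ => plumbingParam_eq_iff hs0⟩
  rintro ⟨x, y⟩ hp
  obtain ⟨w, hw⟩ := exists_plumbingParam_eq hs0 hp.1
  exact ⟨w, (mem_iff w).1 (hw ▸ hp), hw⟩

/-- The map `w ↦ (√t e^{2πiw}, √t e^{-2πiw})` induces an isomorphism of the annulus
`{w : |Im w| < (1/4π) log(16/|t|)}/ℤ` onto the plumbing fiber
`C_t = {(x,y) : xy = t, |x| < 4, |y| < 4}`. -/
theorem plumbing_fiber_parametrization (t s : ℂ) (hs : s ^ 2 = t)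
    (ht0 : 0 < ‖t‖) (ht1 : ‖t‖ < 1)
    (F : ℂ → ℂ × ℂ)
    (hF : ∀ w : ℂ, F w = (s * Complex.exp (2 * Real.pi * Complex.I * w),
                          s * Complex.exp (-(2 * Real.pi * Complex.I * w)))) :
    (∀ w : ℂ, |w.im| < (1 / (4 * Real.pi)) * Real.log (16 / ‖t‖) →
      F w ∈ {p : ℂ × ℂ | p.1 * p.2 = t ∧ ‖p.1‖ < 4 ∧ ‖p.2‖ < 4}) ∧
    (∀ p ∈ {p : ℂ × ℂ | p.1 * p.2 = t ∧ ‖p.1‖ < 4 ∧ ‖p.2‖ < 4},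
      ∃ w : ℂ, |w.im| < (1 / (4 * Real.pi)) * Real.log (16 / ‖t‖) ∧ F w = p) ∧
    (∀ w w' : ℂ, |w.im| < (1 / (4 * Real.pi)) * Real.log (16 / ‖t‖) →
      |w'.im| < (1 / (4 * Real.pi)) * Real.log (16 / ‖t‖) →
      (F w = F w' ↔ ∃ k : ℤ, w - w' = (k : ℂ))) :=
  plumbing_fiber_parametrization_general t s hs ht0 F hF
end
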